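/- Let f ∈ M_k(Γ) with k > 0 and define the modified derivatives D^⟨n⟩(f) = D^n(f)/(k)_n; define D^⟨0⟩(1) = 1 and D^⟨n⟩(1) = D^{n-1}(E₂)/(12·(n-1)!) for n ≥ 1. Then for all n, r ≥ 0 and f a modular form of positive weight (or f = 1): δ^r(D^⟨n⟩(f))/r! = C(n,r)·D^⟨n-r⟩(f), where δ is the quasimodularity derivation (with δ(E₂/12) = 1 and δ annihilating modular forms) and the right side is 0 if r > n. -/
import Mathlib


open Finset

noncomputable section

/-- Rising factorial `x (x+1) ⋯ (x+n-1)` for complex `x`. -/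
def risingC (x : ℂ) (n : ℕ) : ℂ := ∏ i ∈ Finset.range n, (x + i)

lemma risingC_succ (x : ℂ) (n : ℕ) : risingC x (n+1) = risingC x n * (x + n) := by
  simp [risingC, Finset.prod_range_succ]

lemma risingC_nat_ne_zero (k : ℕ) (hk : 0 < k) (n : ℕ) : risingC (k : ℂ) n ≠ 0 := by
  unfold risingC
  apply Finset.prod_ne_zero_iff.mpr
  intro i _
  have h : ((k : ℂ) + i) = ((k + i : ℕ) : ℂ) := by push_cast; ring
  rw [h]
  exact Nat.cast_ne_zero.mpr (by omega)

section aux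

variable {V : Type*} [AddCommGroup V] [Module ℂ V]

lemma aux_WD (D W : Module.End ℂ V) (h1 : W * D - D * W = 2 * D)
    (v : V) (c : ℂ) (hv : W v = c • v) :
    ∀ n : ℕ, W ((D ^ n) v) = (c + 2 * n) • (D ^ n) v := by
  have hWD : ∀ x : V, W (D x) = D (W x) + (2 : ℂ) • D x := by
    intro x
    have := congrArg (fun (T : Module.End ℂ V) => T x) h1
    simp only [LinearMap.sub_apply, Module.End.mul_apply] at this
    have h2 : (2 : Module.End ℂ V) (D x) = D x + D x := by
      have : (2 : Module.End ℂ V) = 1 + 1 := one_add_one_eq_two.symm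
      rw [this, LinearMap.add_apply, Module.End.one_apply]
    rw [h2] at this
    linear_combination (norm := module) this
  intro n
  induction n with
  | zero => simpa using hv
  | succ m ih =>
    have : W ((D ^ (m+1)) v) = W (D ((D ^ m) v)) := by
      rw [pow_succ']; rfl
    rw [this, hWD, ih, pow_succ']
    simp only [Module.End.mul_apply, map_smul]
    push_cast
    module

lemma aux_δD (D W δ : Module.End ℂ V) (h3 : δ * D - D * δ = W) :
    ∀ x : V, δ (D x) = D (δ x) + W x := by
  intro x
  have := congrArg (fun (T : Module.End ℂ V) => T x) h3
  simp only [LinearMap.sub_apply, Module.End.mul_apply] at this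
  linear_combination (norm := module) this

/-- δ on D^n f for modular f of weight k. -/
lemma aux_delta_Dn_f (D W δ : Module.End ℂ V)
    (h1 : W * D - D * W = 2 * D) (h3 : δ * D - D * δ = W)
    (k : ℕ) (f : V) (hf_W : W f = (k : ℂ) • f) (hf_δ : δ f = 0) :
    ∀ n : ℕ, δ ((D ^ n) f) = ((n : ℂ) * ((k : ℂ) + n - 1)) • (D ^ (n - 1)) f := by
  intro n
  induction n with
  | zero => simp [hf_δ]
  | succ m ih =>
    have hstep : δ ((D ^ (m+1)) f) = D (δ ((D ^ m) f)) + W ((D ^ m) f) := by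
      rw [pow_succ']
      exact aux_δD D W δ h3 ((D ^ m) f)
    rw [hstep, ih, aux_WD D W h1 f (k : ℂ) hf_W m, map_smul]
    cases m with
    | zero => simp
    | succ p =>
      have hD : D ((D ^ (p + 1 - 1)) f) = (D ^ (p + 1)) f := by
        show D ((D ^ p) f) = _
        rw [pow_succ']
        rfl
      rw [hD]
      have : (p + 1 + 1 - 1 : ℕ) = p + 1 := rfl
      rw [this]
      push_cast
      match_scalars
      ring

/-- δ on D^n e2. -/
lemma aux_delta_Dn_e2 (D W δ : Module.End ℂ V)
    (h1 : W * D - D * W = 2 * D) (h3 : δ * D - D * δ = W)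
    (u e2 : V) (hu_D : D u = 0)
    (he2_W : W e2 = (2 : ℂ) • e2) (he2_δ : δ e2 = (12 : ℂ) • u) :
    ∀ m : ℕ, δ ((D ^ (m+1)) e2) = (((m : ℂ)+1) * ((m : ℂ)+2)) • (D ^ m) e2 := by
  intro m
  induction m with
  | zero =>
    have : δ ((D ^ 1) e2) = D (δ e2) + W e2 := by
      simpa using aux_δD D W δ h3 e2
    rw [this, he2_δ, map_smul, hu_D, he2_W]
    simp only [pow_zero, Module.End.one_apply, smul_zero, zero_add]
    push_cast
    module
  | succ p ih =>
    have hstep : δ ((D ^ (p+2)) e2) = D (δ ((D ^ (p+1)) e2)) + W ((D ^ (p+1)) e2) := by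
      rw [pow_succ']
      exact aux_δD D W δ h3 ((D ^ (p+1)) e2)
    rw [hstep, ih, aux_WD D W h1 e2 2 he2_W (p+1), map_smul]
    have hD : D ((D ^ p) e2) = (D ^ (p+1)) e2 := by rw [pow_succ']; rfl
    rw [hD]
    push_cast
    match_scalars
    ring

/-- Generic induction on r. -/
lemma aux_gen (δ : Module.End ℂ V) (Φ : ℕ → V)
    (hΦ : ∀ n : ℕ, δ (Φ n) = (n : ℂ) • Φ (n - 1)) :
    ∀ r n : ℕ, ((1 : ℂ) / (r.factorial : ℂ)) • (δ ^ r) (Φ n)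
      = (n.choose r : ℂ) • Φ (n - r) := by
  intro r
  induction r with
  | zero => intro n; simp
  | succ r ih =>
    intro n
    have hpow : (δ ^ (r+1)) (Φ n) = (δ ^ r) (δ (Φ n)) := by
      rw [pow_succ]; rfl
    rw [hpow, hΦ n, map_smul]
    cases n with
    | zero => simp
    | succ m =>
      have hm : (m + 1 - 1 : ℕ) = m := rfl
      rw [hm]
      have key := ih m
      have hfac : ((r+1).factorial : ℂ) = ((r:ℂ)+1) * (r.factorial : ℂ) := by
        rw [Nat.factorial_succ]; push_cast; ring
      have hrne : ((r : ℂ) + 1) ≠ 0 := Nat.cast_add_one_ne_zero r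
      have hfacne : (r.factorial : ℂ) ≠ 0 := Nat.cast_ne_zero.mpr r.factorial_ne_zero
      have hchoose : ((m+1).choose (r+1) : ℂ) * ((r:ℂ)+1) = ((m:ℂ)+1) * (m.choose r : ℂ) := by
        have := Nat.add_one_mul_choose_eq m r
        have h2 : ((Nat.succ m * m.choose r : ℕ) : ℂ) = (((m+1).choose (r+1) * (r+1) : ℕ) : ℂ) := by
          exact_mod_cast congrArg (Nat.cast : ℕ → ℂ) this
        push_cast at h2
        exact h2.symm
      push_cast
      calc ((1 : ℂ) / ((r+1).factorial : ℂ)) • ((m : ℂ)+1) • (δ ^ r) (Φ m)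
          = (((m:ℂ)+1) / ((r:ℂ)+1)) • (((1:ℂ) / (r.factorial : ℂ)) • (δ ^ r) (Φ m)) := by
            rw [smul_smul, smul_smul, hfac]
            congr 1
            field_simp
        _ = (((m:ℂ)+1) / ((r:ℂ)+1)) • ((m.choose r : ℂ) • Φ (m - r)) := by rw [key]
        _ = ((m+1).choose (r+1) : ℂ) • Φ (m - r) := by
            rw [smul_smul]
            congr 1
            rw [div_mul_eq_mul_div, div_eq_iff hrne]
            linear_combination -hchoose

end aux

/-- Work in the `sl₂`-module of quasimodular forms: `V` with operators `D, W, δ` satisfying the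
`sl₂` relations, a vector `u` playing the role of the constant function `1`
(`W u = 0`, `D u = 0`, `δ u = 0`) and a vector `e2` playing the role of `E₂`
(`W e2 = 2•e2`, `δ e2 = 12•u`, i.e. `δ(E₂/12) = 1`).  The modified derivatives are
`D^⟨n⟩(f) = Dⁿ(f)/(k)_n` for `f` of weight `k > 0` with `δ f = 0`, and
`D^⟨0⟩(1) = 1`, `D^⟨n⟩(1) = D^{n-1}(E₂)/(12·(n-1)!)` for `n ≥ 1`.  Then for all `n, r ≥ 0`:
`δ^r(D^⟨n⟩(f))/r! = C(n,r)·D^⟨n-r⟩(f)` (for `f` modular of positive weight, and for `f = 1`),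
where the right side is `0` if `r > n`. -/
theorem statement18 {V : Type*} [AddCommGroup V] [Module ℂ V]
    (D W δ : Module.End ℂ V)
    (h1 : W * D - D * W = 2 * D) (h2 : W * δ - δ * W = -2 * δ) (h3 : δ * D - D * δ = W)
    (u e2 : V) (hu_W : W u = 0) (hu_D : D u = 0) (hu_δ : δ u = 0)
    (he2_W : W e2 = (2 : ℂ) • e2) (he2_δ : δ e2 = (12 : ℂ) • u)
    (k : ℕ) (hk : 0 < k) (f : V) (hf_W : W f = (k : ℂ) • f) (hf_δ : δ f = 0)
    (n r : ℕ) :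
    ((1 : ℂ) / (r.factorial : ℂ)) •
        (δ ^ r) (((1 : ℂ) / risingC (k : ℂ) n) • (D ^ n) f)
      = (n.choose r : ℂ) • (((1 : ℂ) / risingC (k : ℂ) (n - r)) • (D ^ (n - r)) f)
    ∧ ((1 : ℂ) / (r.factorial : ℂ)) •
        (δ ^ r) (if n = 0 then u
          else ((1 : ℂ) / (12 * ((n - 1).factorial : ℂ))) • (D ^ (n - 1)) e2)
      = (n.choose r : ℂ) • (if n - r = 0 then u
          else ((1 : ℂ) / (12 * ((n - r - 1).factorial : ℂ))) • (D ^ (n - r - 1)) e2) := by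
  constructor
  · -- first part
    apply aux_gen δ (fun n => ((1 : ℂ) / risingC (k : ℂ) n) • (D ^ n) f)
    intro m
    simp only [map_smul]
    cases m with
    | zero => simp [hf_δ]
    | succ p =>
      rw [aux_delta_Dn_f D W δ h1 h3 k f hf_W hf_δ (p+1)]
      have hp : (p + 1 - 1 : ℕ) = p := rfl
      rw [hp, smul_smul, smul_smul]
      congr 1
      have hne := risingC_nat_ne_zero k hk p
      have hkp : ((k : ℂ) + p) ≠ 0 := by
        have h : ((k : ℂ) + p) = ((k + p : ℕ) : ℂ) := by push_cast; ring
        rw [h]; exact Nat.cast_ne_zero.mpr (by omega)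
      rw [risingC_succ]
      push_cast
      field_simp
      ring
  · -- second part
    apply aux_gen δ (fun n => if n = 0 then u
      else ((1 : ℂ) / (12 * ((n - 1).factorial : ℂ))) • (D ^ (n - 1)) e2)
    intro m
    cases m with
    | zero => simp [hu_δ]
    | succ p =>
      simp only [Nat.succ_ne_zero, if_false, map_smul]
      cases p with
      | zero =>
        simp only [Nat.sub_self, if_pos rfl]
        have : δ ((D ^ (1 - 1)) e2) = (12 : ℂ) • u := by simpa using he2_δ
        rw [this, smul_smul]
        norm_num [Nat.factorial]
      | succ q =>
        have h1' : (q + 1 + 1 - 1 : ℕ) = q + 1 := rfl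
        rw [h1', aux_delta_Dn_e2 D W δ h1 h3 u e2 hu_D he2_W he2_δ q]
        have h2' : (q + 1 + 1 - 1 - 1 : ℕ) = q := rfl
        simp only [Nat.succ_ne_zero, if_false, h2']
        rw [smul_smul, smul_smul]
        congr 1
        have hfq : ((q+1).factorial : ℂ) = ((q:ℂ)+1) * (q.factorial : ℂ) := by
          rw [Nat.factorial_succ]; push_cast; ring
        have h3' : (q.factorial : ℂ) ≠ 0 := Nat.cast_ne_zero.mpr q.factorial_ne_zero
        have h4' : ((q:ℂ)+1) ≠ 0 := Nat.cast_add_one_ne_zero q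
        rw [hfq]
        push_cast
        field_simp
        ring
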